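/- arXiv:2511.00928 — 6 statements merged into one kernel-verified Lean document; each statement's English description precedes it below -/
import Mathlib

section
/- In ℝ² with K = ℝ²₊, let A₁ be the triangle with vertices (0,0), (−1,0), (−1/2,−1/2), A₂ the triangle with vertices (0,0), (−1/2,−1/2), (0,−1), B₁ the triangle with vertices (0,0), (−3/4,0), (0,−3/4), and B₂ the trapezium with vertices (−1,0), (−3/4,0), (0,−3/4), (0,−1). Then A₁ ∪ A₂ = B₁ ∪ B₂ (so (B₁ ∪ B₂) ⊆ (A₁ ∪ A₂) + K), yet B_i ⊄ A_j + K for all i, j ∈ {1,2}. In particular, the relation ≤_K^l between the unions holds while the relation ≤_K^L between the indexed families fails. -/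
/-!
Both unions are the triangle `x ≤ 0, y ≤ 0, x + y ≥ -1`: it is cut by the diagonal `x = y` into
`A₁, A₂` and by the line `x + y = -3/4` into `B₁, B₂`. Since `K` is the nonnegative orthant, a point
of `A + K` dominates a point of `A`, so a lower bound on a monotone coordinate over `A` persists on
`A + K`. All of `A₁` lies in `y ≥ -1/2` and all of `A₂` in `x ≥ -1/2`, whereas `B₁` and `B₂` both
contain `(-3/4, 0)` and points `(0, y)` with `y < -1/2`.
-/

open Set Pointwise

noncomputable def K3 : Set (ℝ × ℝ) := {p | 0 ≤ p.1 ∧ 0 ≤ p.2}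
noncomputable def A3₁ : Set (ℝ × ℝ) := convexHull ℝ {((0:ℝ), (0:ℝ)), (-1, 0), (-(1/2), -(1/2))}
noncomputable def A3₂ : Set (ℝ × ℝ) := convexHull ℝ {((0:ℝ), (0:ℝ)), (-(1/2), -(1/2)), (0, -1)}
noncomputable def B3₁ : Set (ℝ × ℝ) := convexHull ℝ {((0:ℝ), (0:ℝ)), (-(3/4), 0), (0, -(3/4))}
noncomputable def B3₂ : Set (ℝ × ℝ) :=
  convexHull ℝ {((-1:ℝ), (0:ℝ)), (-(3/4), 0), (0, -(3/4)), (0, -1)}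

theorem mem_convexHull_triple {𝕜 E : Type*} [Field 𝕜] [LinearOrder 𝕜] [IsStrictOrderedRing 𝕜]
    [AddCommGroup E] [Module 𝕜 E] {u v w p : E} {a b c : 𝕜}
    (ha : 0 ≤ a) (hb : 0 ≤ b) (hc : 0 ≤ c) (habc : a + b + c = 1)
    (hp : a • u + b • v + c • w = p) : p ∈ convexHull 𝕜 {u, v, w} := by
  subst hp
  have := (convex_convexHull 𝕜 {u, v, w}).sum_mem (t := Finset.univ) (w := ![a, b, c])
    (z := ![u, v, w]) (fun i _ => by fin_cases i <;> assumption)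
    (by simpa [Fin.sum_univ_three] using habc)
    (fun i _ => subset_convexHull 𝕜 _ (by fin_cases i <;> simp))
  simpa [Fin.sum_univ_three] using this

theorem exists_le_of_mem_add_K3 {S : Set (ℝ × ℝ)} {q : ℝ × ℝ} (hq : q ∈ S + K3) :
    ∃ a ∈ S, a ≤ q := by
  obtain ⟨a, ha, k, ⟨hk₁, hk₂⟩, rfl⟩ := hq
  exact ⟨a, ha, le_add_of_nonneg_right hk₁, le_add_of_nonneg_right hk₂⟩

theorem not_subset_add_K3 {A B : Set (ℝ × ℝ)} {f : ℝ × ℝ → ℝ} (hf : Monotone f) {c : ℝ}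
    (hA : A ⊆ {a | c ≤ f a}) {b : ℝ × ℝ} (hb : b ∈ B) (hbc : f b < c) : ¬ B ⊆ A + K3 := by
  intro hBA
  obtain ⟨a, ha, hab⟩ := exists_le_of_mem_add_K3 (hBA hb)
  exact ((hA ha).trans (hf hab)).not_gt hbc

def lowerTriangle : Set (ℝ × ℝ) := {p | p.1 ≤ 0 ∧ p.2 ≤ 0 ∧ -1 ≤ p.1 + p.2}

theorem convex_lowerTriangle : Convex ℝ lowerTriangle :=
  (convex_halfSpace_le (LinearMap.fst ℝ ℝ ℝ).isLinear 0).inter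
    ((convex_halfSpace_le (LinearMap.snd ℝ ℝ ℝ).isLinear 0).inter
      (convex_halfSpace_ge (LinearMap.fst ℝ ℝ ℝ + LinearMap.snd ℝ ℝ ℝ).isLinear (-1)))

theorem convexHull_subset_lowerTriangle {s : Set (ℝ × ℝ)} (hs : s ⊆ lowerTriangle) :
    convexHull ℝ s ⊆ lowerTriangle :=
  convexHull_min hs convex_lowerTriangle

theorem A3₁_union_A3₂ : A3₁ ∪ A3₂ = lowerTriangle := by
  refine Subset.antisymm (union_subset ?_ ?_) ?_
  · exact convexHull_subset_lowerTriangle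
      (by rintro p (rfl | rfl | rfl) <;> norm_num [lowerTriangle])
  · exact convexHull_subset_lowerTriangle
      (by rintro p (rfl | rfl | rfl) <;> norm_num [lowerTriangle])
  rintro ⟨x, y⟩ ⟨hx, hy, hxy⟩
  rcases le_total x y with h | h
  · refine Or.inl (mem_convexHull_triple (a := 1 + x + y) (b := y - x) (c := -2 * y)
      (by linarith) (by linarith) (by linarith) (by ring) ?_)
    ext <;> simp <;> ring
  · refine Or.inr (mem_convexHull_triple (a := 1 + x + y) (b := -2 * x) (c := x - y)
      (by linarith) (by linarith) (by linarith) (by ring) ?_)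
    ext <;> simp <;> ring

theorem B3₁_union_B3₂ : B3₁ ∪ B3₂ = lowerTriangle := by
  refine Subset.antisymm (union_subset ?_ ?_) ?_
  · exact convexHull_subset_lowerTriangle
      (by rintro p (rfl | rfl | rfl) <;> norm_num [lowerTriangle])
  · exact convexHull_subset_lowerTriangle
      (by rintro p (rfl | rfl | rfl | rfl) <;> norm_num [lowerTriangle])
  rintro ⟨x, y⟩ ⟨hx, hy, hxy⟩
  rcases le_total (-(3/4)) (x + y) with h | h
  · refine Or.inl (mem_convexHull_triple (a := 1 + 4/3 * (x + y)) (b := -(4/3) * x)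
      (c := -(4/3) * y) (by linarith) (by linarith) (by linarith) (by ring) ?_)
    ext <;> simp <;> ring
  -- the trapezium `B₂` is split along its diagonal from `(-3/4, 0)` to `(0, -1)`
  refine Or.inr ?_
  rcases le_total (4 * x + 3 * y) (-3) with h' | h'
  · refine convexHull_mono (s := {(-1, 0), (-(3/4), 0), (0, -1)}) (by simp [insert_subset_iff])
      (mem_convexHull_triple (a := -3 - 4 * x - 3 * y) (b := 4 + 4 * x + 4 * y) (c := -y)
        (by linarith) (by linarith) (by linarith) (by ring) ?_)
    ext <;> simp
    ring
  · refine convexHull_mono (s := {(-(3/4), 0), (0, -(3/4)), (0, -1)}) (by simp)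
      (mem_convexHull_triple (a := -(4/3) * x) (b := 4 + 16/3 * x + 4 * y)
        (c := -3 - 4 * x - 4 * y)
        (by linarith) (by linarith) (by linarith) (by ring) ?_)
    ext <;> simp <;> ring

theorem A3₁_subset_snd_ge : A3₁ ⊆ {p | -(1/2) ≤ p.2} :=
  convexHull_min (by rintro q (rfl | rfl | rfl) <;> norm_num)
    (convex_halfSpace_ge (LinearMap.snd ℝ ℝ ℝ).isLinear _)

theorem A3₂_subset_fst_ge : A3₂ ⊆ {p | -(1/2) ≤ p.1} :=
  convexHull_min (by rintro q (rfl | rfl | rfl) <;> norm_num)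
    (convex_halfSpace_ge (LinearMap.fst ℝ ℝ ℝ).isLinear _)

/-- A₁ ∪ A₂ = B₁ ∪ B₂ (hence ≤_K^l holds for the unions),
    but B_i ⊄ A_j + K for all i, j, so ≤_K^L fails. -/
theorem stmt_3 :
    A3₁ ∪ A3₂ = B3₁ ∪ B3₂ ∧
    (B3₁ ∪ B3₂) ⊆ (A3₁ ∪ A3₂) + K3 ∧
    ¬ B3₁ ⊆ A3₁ + K3 ∧ ¬ B3₁ ⊆ A3₂ + K3 ∧ ¬ B3₂ ⊆ A3₁ + K3 ∧ ¬ B3₂ ⊆ A3₂ + K3 := by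
  have hunion : A3₁ ∪ A3₂ = B3₁ ∪ B3₂ := A3₁_union_A3₂.trans B3₁_union_B3₂.symm
  have hB₁x : ((-(3/4) : ℝ), (0 : ℝ)) ∈ B3₁ := subset_convexHull ℝ _ (by simp)
  have hB₁y : ((0 : ℝ), (-(3/4) : ℝ)) ∈ B3₁ := subset_convexHull ℝ _ (by simp)
  have hB₂x : ((-(3/4) : ℝ), (0 : ℝ)) ∈ B3₂ := subset_convexHull ℝ _ (by simp)
  have hB₂y : ((0 : ℝ), (-1 : ℝ)) ∈ B3₂ := subset_convexHull ℝ _ (by simp)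
  refine ⟨hunion, hunion ▸ subset_add_left _ ⟨le_rfl, le_rfl⟩,
    not_subset_add_K3 monotone_snd A3₁_subset_snd_ge hB₁y (by norm_num),
    not_subset_add_K3 monotone_fst A3₂_subset_fst_ge hB₁x (by norm_num),
    not_subset_add_K3 monotone_snd A3₁_subset_snd_ge hB₂y (by norm_num),
    not_subset_add_K3 monotone_fst A3₂_subset_fst_ge hB₂x (by norm_num)⟩
end

section
/- Let K ⊆ Y be a nonempty proper closed convex cone, P a nonempty subset of Y such that P + K ≠ Y and P + K is closed, and e ∈ K \ {0}. Then P + K = ⋂_{α>0} (P + K − αe). -/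
/-!
A convex cone is closed under addition, so adding a point of `K` keeps a point inside `P + K`; and `K` contains every `α • e` with `α ≥ 0`,
so `P + K ⊆ P + K - α • e`. Conversely, if `y + α • e ∈ P + K` for every `α > 0`, letting `α → 0⁺`
and using that `P + K` is closed gives `y ∈ P + K`.
-/

open Set Pointwise Filter Topology

theorem Set.add_mem_add_of_add_mem {E : Type*} [AddSemigroup E] {P K : Set E}
    (hK : ∀ a ∈ K, ∀ b ∈ K, a + b ∈ K) {y k : E} (hy : y ∈ P + K) (hk : k ∈ K) : y + k ∈ P + K := by
  obtain ⟨p, hp, k', hk', rfl⟩ := hy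
  exact ⟨p, hp, k' + k, hK k' hk' k hk, (add_assoc p k' k).symm⟩

section

variable {E : Type*} [AddCommMonoid E] [Module ℝ E]

theorem Convex.add_mem_of_nonneg_smul_mem {K : Set E} (hconv : Convex ℝ K)
    (hcone : ∀ c : ℝ, 0 ≤ c → ∀ x ∈ K, c • x ∈ K) {a b : E} (ha : a ∈ K) (hb : b ∈ K) :
    a + b ∈ K := by
  have hmid : (1 / 2 : ℝ) • a + (1 / 2 : ℝ) • b ∈ K :=
    hconv ha hb (by norm_num) (by norm_num) (by norm_num)
  have hdouble : (2 : ℝ) • ((1 / 2 : ℝ) • a + (1 / 2 : ℝ) • b) = a + b := by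
    rw [smul_add, smul_smul, smul_smul]
    norm_num
  simpa only [hdouble] using hcone 2 zero_le_two _ hmid

theorem IsClosed.mem_of_forall_pos_add_smul_mem [TopologicalSpace E] [ContinuousAdd E]
    [ContinuousSMul ℝ E] {S : Set E} (hS : IsClosed S) {y e : E}
    (h : ∀ α : ℝ, 0 < α → y + α • e ∈ S) : y ∈ S := by
  have hcont : Continuous fun α : ℝ => y + α • e := by fun_prop
  have htend : Tendsto (fun α : ℝ => y + α • e) (𝓝[>] 0) (𝓝 y) := by
    simpa using (hcont.tendsto 0).mono_left nhdsWithin_le_nhds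
  exact hS.mem_of_tendsto htend (eventually_mem_nhdsWithin.mono h)

end

theorem stmt_6_general {Y : Type*} [AddCommGroup Y] [Module ℝ Y] [TopologicalSpace Y]
    [IsTopologicalAddGroup Y] [ContinuousSMul ℝ Y]
    (K : Set Y) (hKconv : Convex ℝ K)
    (hKcone : ∀ (c : ℝ), 0 ≤ c → ∀ x ∈ K, c • x ∈ K)
    (P : Set Y) (hPKcl : IsClosed (P + K))
    (e : Y) (he : e ∈ K) :
    P + K = ⋂ α ∈ Ioi (0 : ℝ), (fun y => y - α • e) '' (P + K) := by
  have hKadd : ∀ a ∈ K, ∀ b ∈ K, a + b ∈ K := fun a ha b hb =>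
    hKconv.add_mem_of_nonneg_smul_mem hKcone ha hb
  ext y
  simp only [mem_iInter₂, mem_Ioi, mem_image, sub_eq_iff_eq_add, exists_eq_right]
  exact ⟨fun hy α hα => add_mem_add_of_add_mem hKadd hy (hKcone α hα.le e he),
    hPKcl.mem_of_forall_pos_add_smul_mem⟩

/-- if P + K is closed (and ≠ Y) then P + K = ⋂_{α>0} (P + K − αe). -/
theorem stmt_6 {Y : Type*} [AddCommGroup Y] [Module ℝ Y] [TopologicalSpace Y]
    [IsTopologicalAddGroup Y] [ContinuousSMul ℝ Y]
    (K : Set Y) (hKne : K.Nonempty) (hKcl : IsClosed K) (hKconv : Convex ℝ K)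
    (hKcone : ∀ (c : ℝ), 0 ≤ c → ∀ x ∈ K, c • x ∈ K) (hKproper : K ≠ univ)
    (P : Set Y) (hPne : P.Nonempty) (hPK : P + K ≠ univ) (hPKcl : IsClosed (P + K))
    (e : Y) (he : e ∈ K) (he0 : e ≠ 0) :
    P + K = ⋂ α ∈ Ioi (0 : ℝ), (fun y => y - α • e) '' (P + K) :=
  stmt_6_general K hKconv hKcone P hPKcl e he
end

section
/- Let K ⊆ Y be a nonempty proper closed convex cone, Q ⊆ Y nonempty with Q − K closed and Q − K ≠ Y, and e ∈ K \ {0}. Then Q − K = ⋂_{α>0} (Q − K + αe). -/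
open Set Pointwise Filter Topology

/-
A point x of a closed set S with x - α e ∈ S for every α > 0 lies in S, being the limit of
x - α e as α → 0⁺. Conversely, Q - K is stable under subtracting α e because a convex cone
is closed under addition, so x - α e = q - (k + α e).
-/

theorem Convex.add_mem_of_smul_mem {𝕜 E : Type*} [Field 𝕜] [LinearOrder 𝕜]
    [IsStrictOrderedRing 𝕜] [AddCommGroup E] [Module 𝕜 E] {K : Set E} (hconv : Convex 𝕜 K)
    (hcone : ∀ c : 𝕜, 0 ≤ c → ∀ x ∈ K, c • x ∈ K) {a b : E} (ha : a ∈ K) (hb : b ∈ K) :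
    a + b ∈ K := by
  have hmid : (2⁻¹ : 𝕜) • a + (2⁻¹ : 𝕜) • b ∈ K :=
    hconv ha hb (by positivity) (by positivity) (by norm_num)
  have htwice : (2 : 𝕜) • ((2⁻¹ : 𝕜) • a + (2⁻¹ : 𝕜) • b) = a + b := by
    rw [← smul_add, smul_smul, mul_inv_cancel₀ two_ne_zero, one_smul]
  simpa only [htwice] using hcone 2 zero_le_two _ hmid

theorem Set.sub_mem_sub_of_add_mem {E : Type*} [AddCommGroup E] {Q K : Set E}
    (hadd : ∀ a ∈ K, ∀ b ∈ K, a + b ∈ K) {x d : E} (hx : x ∈ Q - K) (hd : d ∈ K) :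
    x - d ∈ Q - K := by
  obtain ⟨q, hq, k, hk, rfl⟩ := hx
  exact ⟨q, hq, k + d, hadd k hk d hd, sub_add_eq_sub_sub q k d⟩

theorem IsClosed.mem_of_forall_pos_sub_smul_mem {E : Type*} [AddCommGroup E] [Module ℝ E]
    [TopologicalSpace E] [IsTopologicalAddGroup E] [ContinuousSMul ℝ E] {S : Set E}
    (hS : IsClosed S) {x e : E} (h : ∀ α : ℝ, 0 < α → x - α • e ∈ S) : x ∈ S := by
  have hlim : Tendsto (fun α : ℝ => x - α • e) (𝓝[>] 0) (𝓝 x) := by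
    refine tendsto_nhdsWithin_of_tendsto_nhds ?_
    have hcont : Continuous fun α : ℝ => x - α • e := by fun_prop
    simpa only [zero_smul, sub_zero] using hcont.tendsto 0
  exact hS.mem_of_tendsto hlim (eventually_mem_nhdsWithin.mono h)

theorem Set.mem_image_add_right_iff {E : Type*} [AddCommGroup E] {S : Set E} {x d : E} :
    x ∈ (fun y => y + d) '' S ↔ x - d ∈ S := by
  rw [image_add_right, mem_preimage, sub_eq_add_neg]

theorem stmt_7_general {Y : Type*} [AddCommGroup Y] [Module ℝ Y] [TopologicalSpace Y]
    [IsTopologicalAddGroup Y] [ContinuousSMul ℝ Y]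
    (K : Set Y) (hKconv : Convex ℝ K)
    (hKcone : ∀ (c : ℝ), 0 ≤ c → ∀ x ∈ K, c • x ∈ K)
    (Q : Set Y) (hQKcl : IsClosed (Q - K))
    (e : Y) (he : e ∈ K) :
    Q - K = ⋂ α ∈ Ioi (0 : ℝ), (fun y => y + α • e) '' (Q - K) := by
  ext x
  simp only [mem_iInter, mem_Ioi, mem_image_add_right_iff]
  refine ⟨fun hx α hα => ?_, hQKcl.mem_of_forall_pos_sub_smul_mem⟩
  exact sub_mem_sub_of_add_mem (fun a ha b hb => hKconv.add_mem_of_smul_mem hKcone ha hb) hx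
    (hKcone α hα.le e he)

/-- if Q − K is closed (and ≠ Y) then Q − K = ⋂_{α>0} (Q − K + αe). -/
theorem stmt_7 {Y : Type*} [AddCommGroup Y] [Module ℝ Y] [TopologicalSpace Y]
    [IsTopologicalAddGroup Y] [ContinuousSMul ℝ Y]
    (K : Set Y) (hKne : K.Nonempty) (hKcl : IsClosed K) (hKconv : Convex ℝ K)
    (hKcone : ∀ (c : ℝ), 0 ≤ c → ∀ x ∈ K, c • x ∈ K) (hKproper : K ≠ univ)
    (Q : Set Y) (hQne : Q.Nonempty) (hQK : Q - K ≠ univ) (hQKcl : IsClosed (Q - K))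
    (e : Y) (he : e ∈ K) (he0 : e ≠ 0) :
    Q - K = ⋂ α ∈ Ioi (0 : ℝ), (fun y => y + α • e) '' (Q - K) :=
  stmt_7_general K hKconv hKcone Q hQKcl e he
end

section
/- Let P, Q be nonempty subsets of Y with P + K closed. Then the following are equivalent: (i) Q ⊆ P + K; (ii) there exists e ∈ K \ {0} such that sup_{q∈Q} inf_{p∈P} z^{e,K}(p − q) ≤ 0; (iii) for all e ∈ K \ {0}, sup_{q∈Q} inf_{p∈P} z^{e,K}(p − q) ≤ 0. -/
open Set Pointwise

/-!
The characterisation is pointwise in `q`: `inf_{p ∈ P} z^{e,K}(p - q) ≤ 0` says exactly that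
`q + t • e ∈ P + K` for every `t > 0`, because a convex cone is closed under addition and so
`{t | t • e - y ∈ K}` is an up-set whenever `e ∈ K`. Letting `t → 0⁺` and using that `P + K` is
closed gives `q ∈ P + K`; the converse is witnessed by `t = 0`.
-/

/-- Gerstewitz scalarization function. -/
noncomputable def zG {Y : Type*} [AddCommGroup Y] [Module ℝ Y] (e : Y) (K : Set Y) (y : Y) :
    EReal :=
  sInf ((fun t : ℝ => (t : EReal)) '' {t : ℝ | t • e - y ∈ K})

/-- ℤ₁^{e,K}(P,Q) = sup_{q∈Q} inf_{p∈P} z^{e,K}(p − q). -/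
noncomputable def Zone {Y : Type*} [AddCommGroup Y] [Module ℝ Y] (e : Y) (K : Set Y)
    (P Q : Set Y) : EReal :=
  ⨆ q ∈ Q, ⨅ p ∈ P, zG e K (p - q)

section Cone

variable {Y : Type*} [AddCommGroup Y] [Module ℝ Y] {K : Set Y}

theorem add_mem_of_convex_of_smul_mem (hKconv : Convex ℝ K)
    (hKcone : ∀ c : ℝ, 0 ≤ c → ∀ x ∈ K, c • x ∈ K) {a b : Y} (ha : a ∈ K) (hb : b ∈ K) :
    a + b ∈ K := by
  have hmid : (1 / 2 : ℝ) • a + (1 / 2 : ℝ) • b ∈ K :=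
    hKconv ha hb (by norm_num) (by norm_num) (by norm_num)
  simpa [smul_add, smul_smul] using hKcone 2 zero_le_two _ hmid

theorem zG_le_of_smul_sub_mem {e y : Y} {t : ℝ} (h : t • e - y ∈ K) : zG e K y ≤ t :=
  sInf_le ⟨t, h, rfl⟩

theorem zG_neg_nonpos {e k : Y} (hk : k ∈ K) : zG e K (-k) ≤ 0 :=
  zG_le_of_smul_sub_mem (t := 0) (by simpa using hk)

theorem smul_sub_mem_of_zG_lt (hKconv : Convex ℝ K)
    (hKcone : ∀ c : ℝ, 0 ≤ c → ∀ x ∈ K, c • x ∈ K) {e y : Y} (he : e ∈ K) {t : ℝ}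
    (h : zG e K y < t) : t • e - y ∈ K := by
  obtain ⟨_, ⟨s, hs, rfl⟩, hst⟩ := sInf_lt_iff.mp h
  have hst : s ≤ t := (EReal.coe_lt_coe_iff.mp hst).le
  have hsplit : t • e - y = (s • e - y) + (t - s) • e := by
    rw [sub_smul]; abel
  rw [hsplit]
  exact add_mem_of_convex_of_smul_mem hKconv hKcone hs (hKcone _ (sub_nonneg.mpr hst) _ he)

end Cone

section TopologicalVectorSpace

variable {Y : Type*} [AddCommGroup Y] [Module ℝ Y] [TopologicalSpace Y] [ContinuousAdd Y]
  [ContinuousSMul ℝ Y] {K : Set Y} {e : Y} {P : Set Y}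

theorem IsClosed.mem_of_forall_pos_add_smul_mem_s8 {S : Set Y} (hS : IsClosed S) {q : Y}
    (h : ∀ t : ℝ, 0 < t → q + t • e ∈ S) : q ∈ S := by
  have hlim : Filter.Tendsto (fun t : ℝ => q + t • e) (nhdsWithin 0 (Ioi 0)) (nhds q) :=
    ((continuous_const.add (continuous_id.smul continuous_const)).tendsto' 0 q
      (by simp)).mono_left nhdsWithin_le_nhds
  exact hS.mem_of_tendsto hlim (eventually_nhdsWithin_of_forall h)

theorem iInf_zG_sub_nonpos_iff (hKconv : Convex ℝ K)
    (hKcone : ∀ c : ℝ, 0 ≤ c → ∀ x ∈ K, c • x ∈ K) (he : e ∈ K) (hPKcl : IsClosed (P + K))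
    (q : Y) : (⨅ p ∈ P, zG e K (p - q)) ≤ 0 ↔ q ∈ P + K := by
  constructor
  · intro h
    refine hPKcl.mem_of_forall_pos_add_smul_mem_s8 (e := e) fun t ht => ?_
    have hlt : (⨅ p ∈ P, zG e K (p - q)) < t := h.trans_lt (EReal.coe_pos.mpr ht)
    obtain ⟨p, hp, hpt⟩ : ∃ p ∈ P, zG e K (p - q) < t := by simpa [iInf_lt_iff] using hlt
    exact ⟨p, hp, _, smul_sub_mem_of_zG_lt hKconv hKcone he hpt, by dsimp only; abel⟩
  · rintro ⟨p, hp, k, hk, rfl⟩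
    calc (⨅ p' ∈ P, zG e K (p' - (p + k))) ≤ zG e K (p - (p + k)) := biInf_le _ hp
      _ = zG e K (-k) := by rw [sub_add_cancel_left]
      _ ≤ 0 := zG_neg_nonpos hk

theorem Zone_nonpos_iff (hKconv : Convex ℝ K)
    (hKcone : ∀ c : ℝ, 0 ≤ c → ∀ x ∈ K, c • x ∈ K) (he : e ∈ K) (hPKcl : IsClosed (P + K))
    (Q : Set Y) : Zone e K P Q ≤ 0 ↔ Q ⊆ P + K := by
  simp only [Zone, iSup₂_le_iff, iInf_zG_sub_nonpos_iff hKconv hKcone he hPKcl, subset_def]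

end TopologicalVectorSpace

theorem stmt_8_general {Y : Type*} [AddCommGroup Y] [Module ℝ Y] [TopologicalSpace Y]
    [IsTopologicalAddGroup Y] [ContinuousSMul ℝ Y]
    (K : Set Y) (hKconv : Convex ℝ K)
    (hKcone : ∀ (c : ℝ), 0 ≤ c → ∀ x ∈ K, c • x ∈ K)
    (hKnontriv : ∃ e, e ∈ K \ {0})
    (P Q : Set Y) (hPKcl : IsClosed (P + K)) :
    (Q ⊆ P + K ↔ ∃ e ∈ K \ {0}, Zone e K P Q ≤ 0) ∧
    (Q ⊆ P + K ↔ ∀ e ∈ K \ {0}, Zone e K P Q ≤ 0) := by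
  have hZone : ∀ e ∈ K \ {0}, Zone e K P Q ≤ 0 ↔ Q ⊆ P + K := fun e he =>
    Zone_nonpos_iff hKconv hKcone he.1 hPKcl Q
  obtain ⟨e₀, he₀⟩ := hKnontriv
  exact ⟨⟨fun hQ => ⟨e₀, he₀, (hZone e₀ he₀).mpr hQ⟩, fun ⟨e, he, hz⟩ => (hZone e he).mp hz⟩,
    ⟨fun hQ e he => (hZone e he).mpr hQ, fun h => (hZone e₀ he₀).mp (h e₀ he₀)⟩⟩

/-- characterization of the l-type set order relation via ℤ₁, without
    any attainment assumption, assuming P + K closed. -/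
theorem stmt_8 {Y : Type*} [AddCommGroup Y] [Module ℝ Y] [TopologicalSpace Y]
    [IsTopologicalAddGroup Y] [ContinuousSMul ℝ Y]
    (K : Set Y) (hKne : K.Nonempty) (hKcl : IsClosed K) (hKconv : Convex ℝ K)
    (hKcone : ∀ (c : ℝ), 0 ≤ c → ∀ x ∈ K, c • x ∈ K) (hKproper : K ≠ univ)
    (hKnontriv : ∃ e, e ∈ K \ {0})
    (P Q : Set Y) (hPne : P.Nonempty) (hQne : Q.Nonempty) (hPKcl : IsClosed (P + K)) :
    (Q ⊆ P + K ↔ ∃ e ∈ K \ {0}, Zone e K P Q ≤ 0) ∧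
    (Q ⊆ P + K ↔ ∀ e ∈ K \ {0}, Zone e K P Q ≤ 0) :=
  stmt_8_general K hKconv hKcone hKnontriv P Q hPKcl
end

section
/- In ℝ² with K = {(x,0) : x ≥ 0}, A = {(x,0) : x ≤ 0}, B = K, one has A ⊆ B − K, and for every e ∈ K \ {0}, sup_{a∈A} inf_{b∈B} z^{e,K}(a − b) = −∞; moreover, for any fixed a ∈ A and e ∈ K \ {0}, the infimum inf_{b∈B} z^{e,K}(a − b) is not attained by any b ∈ B. -/
open Set Pointwise

noncomputable def K10 : Set (ℝ × ℝ) := {p | p.2 = 0 ∧ 0 ≤ p.1}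
noncomputable def A10 : Set (ℝ × ℝ) := {p | p.2 = 0 ∧ p.1 ≤ 0}
noncomputable def B10 : Set (ℝ × ℝ) := K10

lemma zG_eval (c : ℝ) (hc : 0 < c) (r : ℝ) :
    zG (c, 0) K10 (r, 0) = ((r / c : ℝ) : EReal) := by
  unfold zG K10
  apply le_antisymm
  · apply sInf_le
    refine ⟨r / c, ?_, rfl⟩
    simp only [mem_setOf_eq, Prod.smul_mk, smul_eq_mul, Prod.mk_sub_mk]
    constructor
    · simp
    · simp [div_mul_cancel₀ r hc.ne']
  · apply le_sInf
    rintro z ⟨t, ht, rfl⟩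
    simp only [mem_setOf_eq, Prod.smul_mk, smul_eq_mul, Prod.mk_sub_mk] at ht
    have : r / c ≤ t := by
      rw [div_le_iff₀ hc]; linarith [ht.2]
    show ((r / c : ℝ) : EReal) ≤ (t : EReal)
    exact_mod_cast this

lemma inner_bot (c x : ℝ) (hc : 0 < c) :
    (⨅ b ∈ B10, zG (c, 0) K10 ((x, 0) - b)) = ⊥ := by
  rw [EReal.eq_bot_iff_forall_lt]
  intro m
  have hs : (0 : ℝ) ≤ max 0 (x - (m - 1) * c) := le_max_left _ _
  have hb : ((max 0 (x - (m - 1) * c), 0) : ℝ × ℝ) ∈ B10 := ⟨rfl, hs⟩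
  refine lt_of_le_of_lt (iInf₂_le _ hb) ?_
  have : ((x, 0) : ℝ × ℝ) - (max 0 (x - (m - 1) * c), 0) = (x - max 0 (x - (m - 1) * c), 0) := by
    simp [Prod.ext_iff]
  rw [this, zG_eval c hc]
  have h1 : x - max 0 (x - (m - 1) * c) ≤ (m - 1) * c := by
    have := le_max_right 0 (x - (m - 1) * c); linarith
  have h2 : (x - max 0 (x - (m - 1) * c)) / c < m := by
    rw [div_lt_iff₀ hc]
    nlinarith
  exact_mod_cast h2

/-- A ⊆ B − K, sup_{a∈A} inf_{b∈B} z^{e,K}(a−b) = −∞ for every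
    e ∈ K \ {0}, and for each fixed a ∈ A and e ∈ K \ {0} the inner infimum is not
    attained at any b ∈ B. -/
theorem stmt_10 :
    A10 ⊆ B10 - K10 ∧
    (∀ e ∈ K10 \ {0}, (⨆ a ∈ A10, ⨅ b ∈ B10, zG e K10 (a - b)) = ⊥) ∧
    (∀ a ∈ A10, ∀ e ∈ K10 \ {0}, ∀ b ∈ B10,
      zG e K10 (a - b) ≠ ⨅ b' ∈ B10, zG e K10 (a - b')) := by
  have epos : ∀ e ∈ K10 \ {(0 : ℝ × ℝ)}, e = (e.1, 0) ∧ 0 < e.1 := by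
    rintro e ⟨⟨h2, h1⟩, hne⟩
    refine ⟨by simp [Prod.ext_iff, h2], ?_⟩
    rcases h1.lt_or_eq with h | h
    · exact h
    · exact absurd (by simp [Prod.ext_iff, h2, h.symm] : e = 0) hne
  refine ⟨?_, ?_, ?_⟩
  · rintro ⟨x, y⟩ ⟨hy, hx⟩
    obtain rfl : y = 0 := hy
    simp only at hx
    refine ⟨(0, 0), ⟨rfl, le_refl 0⟩, (-x, 0), ⟨rfl, by simpa using hx⟩, ?_⟩
    simp [Prod.ext_iff]
  · intro e he
    obtain ⟨heq, hc⟩ := epos e he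
    rw [heq]
    have : ∀ a ∈ A10, (⨅ b ∈ B10, zG (e.1, 0) K10 (a - b)) = ⊥ := by
      rintro ⟨x, y⟩ ⟨hy, hx⟩
      subst hy
      exact inner_bot e.1 x hc
    refine le_antisymm ?_ bot_le
    calc (⨆ a ∈ A10, ⨅ b ∈ B10, zG (e.1, 0) K10 (a - b))
        ≤ ⨆ a ∈ A10, (⊥ : EReal) := by
          refine iSup₂_mono fun a ha => ?_
          rw [this a ha]
      _ ≤ ⊥ := by simp
  · rintro ⟨x, y⟩ ⟨hy, hx⟩ e he ⟨s, u⟩ ⟨hu, hs⟩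
    obtain ⟨heq, hc⟩ := epos e he
    subst hy; subst hu
    rw [heq, inner_bot e.1 x hc]
    have : ((x, 0) : ℝ × ℝ) - (s, 0) = (x - s, 0) := by simp [Prod.ext_iff]
    rw [this, zG_eval e.1 hc]
    simp
end

section
/- If P ≤_K^L Q, then for every e ∈ K \ {0}, inf_{γ∈Γ} 𝒵₁^{e,K}(P_γ) ≤ inf_{λ∈Λ} 𝒵₁^{e,K}(Q_λ), where 𝒵₁^{e,K}(A) = inf_{x∈A} z^{e,K}(x). -/
open Set Pointwise

/-- if P ≤_K^L Q then inf_γ 𝒵₁^{e,K}(P_γ) ≤ inf_λ 𝒵₁^{e,K}(Q_λ)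
    for every e ∈ K \ {0}, where 𝒵₁^{e,K}(A) = inf_{x∈A} z^{e,K}(x). -/
theorem stmt_17 {Y Γ Λ : Type*} [AddCommGroup Y] [Module ℝ Y] [TopologicalSpace Y]
    (K : Set Y) (hKne : K.Nonempty) (hKcl : IsClosed K) (hKconv : Convex ℝ K)
    (hKcone : ∀ (c : ℝ), 0 ≤ c → ∀ x ∈ K, c • x ∈ K) (hKproper : K ≠ univ)
    (hKpointed : K ∩ (-K) ⊆ {0})
    (P : Γ → Set Y) (Q : Λ → Set Y)
    (hP : ∀ γ, (P γ).Nonempty) (hQ : ∀ lam, (Q lam).Nonempty)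
    (hLQ : ∀ lam : Λ, ∃ γ : Γ, Q lam ⊆ P γ + K) :
    ∀ e ∈ K \ {0},
      (⨅ γ : Γ, ⨅ x ∈ P γ, zG e K x) ≤ ⨅ lam : Λ, ⨅ x ∈ Q lam, zG e K x := by
  intro e _he
  have hadd : ∀ x ∈ K, ∀ y ∈ K, x + y ∈ K := by
    intro x hx y hy
    have h := hKconv hx hy (by norm_num : (0:ℝ) ≤ 1/2) (by norm_num : (0:ℝ) ≤ 1/2)
      (by norm_num)
    have h2 := hKcone 2 (by norm_num) _ h
    have : (2:ℝ) • ((1/2 : ℝ) • x + (1/2 : ℝ) • y) = x + y := by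
      rw [smul_add, smul_smul, smul_smul]; norm_num
    rwa [this] at h2
  refine le_iInf fun lam => ?_
  obtain ⟨γ, hγ⟩ := hLQ lam
  refine le_trans (iInf_le _ γ) (le_iInf fun y => le_iInf fun hy => ?_)
  obtain ⟨p, hp, k, hk, rfl⟩ := hγ hy
  refine le_trans (iInf_le _ p) (le_trans (iInf_le _ hp) ?_)
  -- zG e K p ≤ zG e K (p + k)
  apply sInf_le_sInf
  rintro t ⟨s, hs, rfl⟩
  refine ⟨s, ?_, rfl⟩
  have : s • e - p = (s • e - (p + k)) + k := by abel
  rw [Set.mem_setOf_eq, this]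
  exact hadd _ hs _ hk
end
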